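/- For any p = (p_0,...,p_k) ∈ [0,1]^{k+1} with p_0 = 0, p_k = 1: (1/k)∫_0^1 Ĉ(w,p) · 1/(π√(w(1-w))) dw ≥ 2/(k² π² ln 2), where Ĉ(w,p) = ∑_z α_z(w) d_2(p_z ‖ ∑_{z'} α_{z'}(w) p_{z'}) and α_z(w) = C(k,z) w^z (1-w)^{k-z}. -/

import Mathlib

open Finset

/-- Binomial pmf: α_z(w) = C(k,z) w^z (1-w)^{k-z}. -/
noncomputable def alph (k z : ℕ) (w : ℝ) : ℝ :=
  (k.choose z : ℝ) * w ^ z * (1 - w) ^ (k - z)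

/-- Binary KL divergence in bits. -/
noncomputable def d2 (p q : ℝ) : ℝ :=
  p * Real.logb 2 (p / q) + (1 - p) * Real.logb 2 ((1 - p) / (1 - q))

/-- The payoff Ĉ(w,p) expressed as an average divergence. -/
noncomputable def Chat (k : ℕ) (w : ℝ) (p : ℕ → ℝ) : ℝ :=
  ∑ z ∈ Finset.range (k + 1),
    alph k z w * d2 (p z) (∑ z' ∈ Finset.range (k + 1), alph k z' w * p z')

/-!
Pinsker's inequality bounds `Chat k w p` below by `(2 / log 2) ∑ α_z (p_z - q)²`, where
`q(w) = ∑ α_z(w) p_z` is a polynomial with `q 0 = 0` and `q 1 = 1`. Since `w (1 - w) q'(w)` is the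
covariance of `z` and `p_z` under the binomial law `α(w)`, and `z` has variance `k w (1 - w)`,
Cauchy–Schwarz gives `∑ α_z (p_z - q)² ≥ w (1 - w) q'² / k`. Against the arcsine density the
integrand is therefore at least `2 / (k π log 2) · q'² √(w (1 - w))`, and the pointwise AM-GM
inequality `q' ≤ (π / 2) q'² √(w (1 - w)) + 1 / (2 π √(w (1 - w)))`, integrated using `∫ q' = 1`
and `∫ 1 / √(w (1 - w)) = π`, gives `∫ q'² √(w (1 - w)) ≥ 1 / π`. The integrand is integrable
because `Chat k w p ≤ k log (1 / (w (1 - w))) / log 2`.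
-/

open Real Set Polynomial

noncomputable def pinskerGap (p x : ℝ) : ℝ :=
  p * log (p / x) + (1 - p) * log ((1 - p) / (1 - x)) - 2 * (p - x) ^ 2

lemma pinskerGap_self (p : ℝ) : pinskerGap p p = 0 := by
  rcases eq_or_ne p 0 with rfl | h0
  · simp [pinskerGap]
  rcases eq_or_ne p 1 with rfl | h1
  · simp [pinskerGap]
  simp [pinskerGap, div_self h0, div_self (sub_ne_zero.2 h1.symm)]

lemma pinskerGap_one_sub (p x : ℝ) : pinskerGap (1 - p) (1 - x) = pinskerGap p x := by
  simp only [pinskerGap, sub_sub_cancel]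
  ring

lemma mul_log_div_eq (c : ℝ) {y : ℝ} (hy : y ≠ 0) : c * log (c / y) = c * log c - c * log y := by
  rcases eq_or_ne c 0 with rfl | hc
  · simp
  · rw [log_div hc hy]
    ring

lemma continuousOn_mul_log_div {c : ℝ} {f : ℝ → ℝ} {s : Set ℝ}
    (hf : ContinuousOn f s) (hs : c ≠ 0 → ∀ x ∈ s, f x ≠ 0) :
    ContinuousOn (fun x => c * log (c / f x)) s := by
  rcases eq_or_ne c 0 with rfl | hc
  · simpa using continuousOn_const
  · exact continuousOn_const.mul (ContinuousOn.log (continuousOn_const.div hf (hs hc))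
      fun x hx => div_ne_zero hc (hs hc x hx))

lemma hasDerivAt_pinskerGap (p : ℝ) {x : ℝ} (hx : x ∈ Ioo (0 : ℝ) 1) :
    HasDerivAt (pinskerGap p) ((x - p) * (1 - 4 * (x * (1 - x))) / (x * (1 - x))) x := by
  obtain ⟨hx0, hx1⟩ := hx
  have h1x : 1 - x ≠ 0 := sub_ne_zero.2 hx1.ne'
  have hlog : HasDerivAt (fun y => p * log p - p * log y) (-(p / x)) x := by
    simpa [div_eq_mul_inv] using ((hasDerivAt_log hx0.ne').const_mul p).const_sub (p * log p)
  have hlog' : HasDerivAt (fun y => (1 - p) * log (1 - p) - (1 - p) * log (1 - y))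
      ((1 - p) / (1 - x)) x := by
    have := (((hasDerivAt_log h1x).comp x ((hasDerivAt_id x).const_sub 1)).const_mul
      (1 - p)).const_sub ((1 - p) * log (1 - p))
    exact this.congr_deriv (by simp [div_eq_mul_inv])
  have hsq : HasDerivAt (fun y => 2 * (p - y) ^ 2) (-(4 * (p - x))) x := by
    have := (((hasDerivAt_id x).const_sub p).pow 2).const_mul 2
    exact this.congr_deriv (by norm_num; ring)
  have hsum : HasDerivAt (fun y => (p * log p - p * log y)
      + ((1 - p) * log (1 - p) - (1 - p) * log (1 - y)) - 2 * (p - y) ^ 2)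
      ((x - p) * (1 - 4 * (x * (1 - x))) / (x * (1 - x))) x :=
    ((hlog.add hlog').sub hsq).congr_deriv (by field_simp; ring)
  refine hsum.congr_of_eventuallyEq ?_
  filter_upwards [eventually_ne_nhds hx0.ne', eventually_ne_nhds hx1.ne] with y hy0 hy1
  simp only [pinskerGap, mul_log_div_eq _ hy0, mul_log_div_eq _ (sub_ne_zero.2 hy1.symm)]

lemma pinskerGap_nonneg_of_le {p q : ℝ} (hp : 0 ≤ p) (hpq : p ≤ q) (hq : q < 1) :
    0 ≤ pinskerGap p q := by
  have hmono : MonotoneOn (pinskerGap p) (Icc p q) := by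
    refine monotoneOn_of_deriv_nonneg (convex_Icc p q) ?_ ?_ ?_
    · refine ((continuousOn_mul_log_div continuousOn_id ?_).add
        (continuousOn_mul_log_div (continuousOn_const.sub continuousOn_id) ?_)).sub
        (by fun_prop)
      · exact fun hp0 x hx => (lt_of_lt_of_le (lt_of_le_of_ne hp (Ne.symm hp0)) hx.1).ne'
      · exact fun _ x hx => sub_ne_zero.2 (hx.2.trans_lt hq).ne'
    · rw [interior_Icc]
      exact fun x hx => (hasDerivAt_pinskerGap p ⟨hp.trans_lt hx.1, hx.2.trans hq⟩)
        |>.differentiableAt.differentiableWithinAt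
    · rw [interior_Icc]
      intro x hx
      have hx0 : 0 < x := hp.trans_lt hx.1
      have hx1 : x < 1 := hx.2.trans hq
      rw [(hasDerivAt_pinskerGap p ⟨hx0, hx1⟩).deriv]
      refine div_nonneg (mul_nonneg (by linarith [hx.1]) ?_) (by nlinarith)
      nlinarith [sq_nonneg (2 * x - 1)]
  simpa [pinskerGap_self] using hmono (left_mem_Icc.2 hpq) (right_mem_Icc.2 hpq) hpq

lemma pinskerGap_nonneg {p q : ℝ} (hp : p ∈ Icc (0 : ℝ) 1) (hq : q ∈ Ioo (0 : ℝ) 1) :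
    0 ≤ pinskerGap p q := by
  rcases le_total p q with h | h
  · exact pinskerGap_nonneg_of_le hp.1 h hq.2
  · rw [← pinskerGap_one_sub]
    exact pinskerGap_nonneg_of_le (by linarith [hp.2]) (by linarith) (by linarith [hq.1])

lemma d2_eq_div_log_two (p q : ℝ) :
    d2 p q = (p * log (p / q) + (1 - p) * log ((1 - p) / (1 - q))) / log 2 := by
  simp only [d2, logb]
  ring

lemma two_div_log_two_mul_sq_le_d2 {p q : ℝ} (hp : p ∈ Icc (0 : ℝ) 1)
    (hq : q ∈ Ioo (0 : ℝ) 1) : 2 / log 2 * (p - q) ^ 2 ≤ d2 p q := by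
  have hgap := pinskerGap_nonneg hp hq
  rw [pinskerGap] at hgap
  rw [d2_eq_div_log_two, div_mul_eq_mul_div, div_le_div_iff_of_pos_right (log_pos one_lt_two)]
  linarith

lemma mul_log_div_le_neg_log {a q : ℝ} (ha : a ∈ Icc (0 : ℝ) 1) (hq : q ∈ Ioc (0 : ℝ) 1) :
    a * log (a / q) ≤ -log q := by
  rcases ha.1.eq_or_lt with rfl | ha0
  · simpa using log_nonpos hq.1.le hq.2
  rw [log_div ha0.ne' hq.1.ne']
  nlinarith [log_nonpos ha.1 ha.2, log_nonpos hq.1.le hq.2, ha.2]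

lemma d2_le_neg_log_div_log_two {p q : ℝ} (hp : p ∈ Icc (0 : ℝ) 1) (hq : q ∈ Ioo (0 : ℝ) 1) :
    d2 p q ≤ -log (q * (1 - q)) / log 2 := by
  have h1 := mul_log_div_le_neg_log hp ⟨hq.1, hq.2.le⟩
  have h2 := mul_log_div_le_neg_log (a := 1 - p) (q := 1 - q)
    ⟨by linarith [hp.2], by linarith [hp.1]⟩ ⟨by linarith [hq.2], by linarith [hq.1]⟩
  rw [d2_eq_div_log_two, div_le_div_iff_of_pos_right (log_pos one_lt_two),
    log_mul hq.1.ne' (by linarith [hq.2])]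
  linarith

lemma mul_natCast_mul_pow_sub_one {R : Type*} [CommSemiring R] (x : R) (n : ℕ) :
    x * (n * x ^ (n - 1)) = n * x ^ n := by
  cases n with
  | zero => simp
  | succ n => rw [Nat.add_sub_cancel, pow_succ]; ring

lemma X_mul_one_sub_X_mul_derivative_bernsteinPolynomial {R : Type*} [CommRing R] {k z : ℕ}
    (hz : z ≤ k) :
    X * (1 - X) * derivative (bernsteinPolynomial R k z)
      = ((z : R[X]) - (k : R[X]) * X) * bernsteinPolynomial R k z := by
  obtain ⟨m, rfl⟩ := Nat.exists_eq_add_of_le hz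
  simp only [bernsteinPolynomial, Nat.add_sub_cancel_left, derivative_mul, derivative_natCast,
    derivative_pow, derivative_sub, derivative_one, derivative_X, map_natCast]
  push_cast
  linear_combination (((z + m).choose z : R[X]) * (1 - X) ^ m * (1 - X))
      * mul_natCast_mul_pow_sub_one (X : R[X]) z
    - (((z + m).choose z : R[X]) * X ^ z * X) * mul_natCast_mul_pow_sub_one (1 - X : R[X]) m

lemma alph_eq_eval (k z : ℕ) (w : ℝ) : alph k z w = (bernsteinPolynomial ℝ k z).eval w := by
  simp [bernsteinPolynomial, alph]

lemma alph_nonneg (k z : ℕ) {w : ℝ} (hw : w ∈ Icc (0 : ℝ) 1) : 0 ≤ alph k z w := by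
  have := hw.1
  have := sub_nonneg.2 hw.2
  unfold alph
  positivity

lemma sum_alph (k : ℕ) (w : ℝ) : ∑ z ∈ Finset.range (k + 1), alph k z w = 1 := by
  simpa [alph_eq_eval, eval_finsetSum] using congrArg (eval w) (bernsteinPolynomial.sum ℝ k)

lemma sum_natCast_mul_alph (k : ℕ) (w : ℝ) :
    ∑ z ∈ Finset.range (k + 1), (z : ℝ) * alph k z w = k * w := by
  simpa [alph_eq_eval, eval_finsetSum] using
    congrArg (eval w) (bernsteinPolynomial.sum_smul ℝ k)

lemma sum_sq_mul_alph (k : ℕ) (w : ℝ) :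
    ∑ z ∈ Finset.range (k + 1), ((k : ℝ) * w - z) ^ 2 * alph k z w = k * w * (1 - w) := by
  simpa [alph_eq_eval, eval_finsetSum] using
    congrArg (eval w) (bernsteinPolynomial.variance ℝ k)

noncomputable def bernsteinSum (k : ℕ) (p : ℕ → ℝ) : ℝ[X] :=
  ∑ z ∈ Finset.range (k + 1), C (p z) * bernsteinPolynomial ℝ k z

lemma eval_bernsteinSum (k : ℕ) (p : ℕ → ℝ) (w : ℝ) :
    (bernsteinSum k p).eval w = ∑ z ∈ Finset.range (k + 1), alph k z w * p z := by
  simp [bernsteinSum, eval_finsetSum, alph_eq_eval, mul_comm]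

lemma mul_eval_derivative_bernsteinSum (k : ℕ) (p : ℕ → ℝ) (w : ℝ) :
    w * (1 - w) * (derivative (bernsteinSum k p)).eval w
      = ∑ z ∈ Finset.range (k + 1), ((z : ℝ) - k * w) * alph k z w * p z := by
  have hpoly : X * (1 - X) * derivative (bernsteinSum k p) = ∑ z ∈ Finset.range (k + 1),
      C (p z) * (((z : ℝ[X]) - (k : ℝ[X]) * X) * bernsteinPolynomial ℝ k z) := by
    rw [bernsteinSum, derivative_sum, Finset.mul_sum]
    refine Finset.sum_congr rfl fun z hz => ?_
    rw [derivative_C_mul, ← X_mul_one_sub_X_mul_derivative_bernsteinPolynomial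
      (Finset.mem_range_succ_iff.1 hz)]
    ring
  have h := congrArg (eval w) hpoly
  simp only [eval_mul, eval_sub, eval_X, eval_one, eval_finsetSum, eval_C, eval_natCast,
    ← alph_eq_eval] at h
  rw [h]
  exact Finset.sum_congr rfl fun z _ => by ring

lemma mul_sq_eval_derivative_bernsteinSum_le (k : ℕ) (p : ℕ → ℝ) {w : ℝ}
    (hw : w ∈ Icc (0 : ℝ) 1) :
    w * (1 - w) * (derivative (bernsteinSum k p)).eval w ^ 2
      ≤ k * ∑ z ∈ Finset.range (k + 1), alph k z w * (p z - (bernsteinSum k p).eval w) ^ 2 := by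
  set q := (bernsteinSum k p).eval w
  set q' := (derivative (bernsteinSum k p)).eval w
  have hα : ∀ z, 0 ≤ alph k z w := fun z => alph_nonneg k z hw
  have hcentred : ∑ z ∈ Finset.range (k + 1), ((z : ℝ) - k * w) * alph k z w = 0 := by
    simp only [sub_mul, Finset.sum_sub_distrib, ← Finset.mul_sum, mul_assoc, sum_natCast_mul_alph,
      sum_alph]
    ring
  have hcov : w * (1 - w) * q'
      = ∑ z ∈ Finset.range (k + 1), alph k z w * (p z - q) * ((z : ℝ) - k * w) := by
    rw [mul_eval_derivative_bernsteinSum, ← sub_zero (Finset.sum _ _), ← mul_zero q, ← hcentred,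
      Finset.mul_sum, ← Finset.sum_sub_distrib]
    exact Finset.sum_congr rfl fun z _ => by ring
  have hcs := Finset.sum_sq_le_sum_mul_sum_of_sq_le_mul (Finset.range (k + 1))
    (r := fun z => alph k z w * (p z - q) * ((z : ℝ) - k * w))
    (f := fun z => alph k z w * (p z - q) ^ 2) (g := fun z => ((k : ℝ) * w - z) ^ 2 * alph k z w)
    (fun z _ => mul_nonneg (hα z) (sq_nonneg _)) (fun z _ => mul_nonneg (sq_nonneg _) (hα z))
    (fun z _ => le_of_eq (by ring))
  rw [← hcov, sum_sq_mul_alph] at hcs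
  rcases (mul_nonneg hw.1 (sub_nonneg.2 hw.2)).eq_or_lt with hu | hu
  · rw [← hu, zero_mul]
    exact mul_nonneg (Nat.cast_nonneg k)
      (Finset.sum_nonneg fun z _ => mul_nonneg (hα z) (sq_nonneg _))
  · refine le_of_mul_le_mul_left ?_ hu
    linear_combination hcs

section BernsteinSumBounds

variable {k : ℕ} {p : ℕ → ℝ} (hp : ∀ z ≤ k, p z ∈ Icc (0 : ℝ) 1) {w : ℝ}
include hp

lemma pow_le_eval_bernsteinSum (hk1 : p k = 1) (hw : w ∈ Icc (0 : ℝ) 1) :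
    w ^ k ≤ (bernsteinSum k p).eval w := by
  have h := Finset.single_le_sum (f := fun z => alph k z w * p z)
    (fun z hz => mul_nonneg (alph_nonneg k z hw) (hp z (Finset.mem_range_succ_iff.1 hz)).1)
    (Finset.self_mem_range_succ k)
  simpa [eval_bernsteinSum, alph, hk1] using h

lemma eval_bernsteinSum_le (h0 : p 0 = 0) (hw : w ∈ Icc (0 : ℝ) 1) :
    (bernsteinSum k p).eval w ≤ 1 - (1 - w) ^ k := by
  have h := Finset.single_le_sum (f := fun z => alph k z w * (1 - p z))
    (fun z hz => mul_nonneg (alph_nonneg k z hw)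
      (sub_nonneg.2 (hp z (Finset.mem_range_succ_iff.1 hz)).2))
    (Finset.mem_range.2 k.succ_pos)
  simp only [mul_sub, mul_one, Finset.sum_sub_distrib, sum_alph, ← eval_bernsteinSum] at h
  simp only [alph, h0, Nat.choose_zero_right, Nat.cast_one, pow_zero, Nat.sub_zero,
    one_mul, mul_one] at h
  linarith

variable (h0 : p 0 = 0) (hk1 : p k = 1)
include h0 hk1

lemma eval_bernsteinSum_mem_Ioo (hw : w ∈ Ioo (0 : ℝ) 1) :
    (bernsteinSum k p).eval w ∈ Ioo (0 : ℝ) 1 := by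
  have hlow := pow_le_eval_bernsteinSum hp hk1 (Ioo_subset_Icc_self hw)
  have hupp := eval_bernsteinSum_le hp h0 (Ioo_subset_Icc_self hw)
  have := pow_pos hw.1 k
  have := pow_pos (sub_pos.2 hw.2) k
  constructor <;> linarith

lemma mul_pow_le_eval_bernsteinSum_mul_one_sub (hw : w ∈ Icc (0 : ℝ) 1) :
    (w * (1 - w)) ^ k ≤ (bernsteinSum k p).eval w * (1 - (bernsteinSum k p).eval w) := by
  rw [mul_pow]
  have := pow_nonneg hw.1 k
  exact mul_le_mul (pow_le_eval_bernsteinSum hp hk1 hw)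
    (by linarith [eval_bernsteinSum_le hp h0 hw]) (pow_nonneg (sub_nonneg.2 hw.2) k)
    (this.trans (pow_le_eval_bernsteinSum hp hk1 hw))

end BernsteinSumBounds

lemma Chat_eq (k : ℕ) (w : ℝ) (p : ℕ → ℝ) :
    Chat k w p = ∑ z ∈ Finset.range (k + 1), alph k z w * d2 (p z) ((bernsteinSum k p).eval w) := by
  rw [Chat, eval_bernsteinSum]

section ChatBounds

variable {k : ℕ} {p : ℕ → ℝ} (hp : ∀ z ≤ k, p z ∈ Icc (0 : ℝ) 1) {w : ℝ}
  (hw : w ∈ Icc (0 : ℝ) 1) (hq : (bernsteinSum k p).eval w ∈ Ioo (0 : ℝ) 1)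
include hp hw hq

lemma two_div_log_two_mul_sum_le_Chat :
    2 / log 2 * ∑ z ∈ Finset.range (k + 1), alph k z w * (p z - (bernsteinSum k p).eval w) ^ 2
      ≤ Chat k w p := by
  rw [Chat_eq, Finset.mul_sum]
  refine Finset.sum_le_sum fun z hz => ?_
  rw [mul_left_comm]
  exact mul_le_mul_of_nonneg_left
    (two_div_log_two_mul_sq_le_d2 (hp z (Finset.mem_range_succ_iff.1 hz)) hq)
    (alph_nonneg k z hw)

lemma Chat_nonneg : 0 ≤ Chat k w p :=
  (two_div_log_two_mul_sum_le_Chat hp hw hq).trans' <| mul_nonneg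
    (div_nonneg zero_le_two (log_nonneg one_le_two))
    (Finset.sum_nonneg fun z _ => mul_nonneg (alph_nonneg k z hw) (sq_nonneg _))

lemma Chat_le_neg_log_div_log_two :
    Chat k w p ≤ -log ((bernsteinSum k p).eval w * (1 - (bernsteinSum k p).eval w)) / log 2 := by
  rw [Chat_eq]
  calc _ ≤ ∑ z ∈ Finset.range (k + 1), alph k z w
          * (-log ((bernsteinSum k p).eval w * (1 - (bernsteinSum k p).eval w)) / log 2) :=
        Finset.sum_le_sum fun z hz => mul_le_mul_of_nonneg_left
          (d2_le_neg_log_div_log_two (hp z (Finset.mem_range_succ_iff.1 hz)) hq)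
          (alph_nonneg k z hw)
    _ = _ := by rw [← Finset.sum_mul, sum_alph, one_mul]

end ChatBounds

open MeasureTheory intervalIntegral

lemma hasDerivAt_arcsin_two_mul_sub_one {x : ℝ} (hx : x ∈ Ioo (0 : ℝ) 1) :
    HasDerivAt (fun w => arcsin (2 * w - 1)) (√(x * (1 - x)))⁻¹ x := by
  have h := (hasDerivAt_arcsin (by linarith [hx.1] : 2 * x - 1 ≠ -1)
    (by linarith [hx.2] : 2 * x - 1 ≠ 1)).comp x (((hasDerivAt_id x).const_mul 2).sub_const 1)
  refine h.congr_deriv ?_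
  rw [show 1 - (2 * x - 1) ^ 2 = 2 ^ 2 * (x * (1 - x)) by ring, sqrt_mul (by norm_num),
    sqrt_sq zero_le_two]
  field_simp

lemma intervalIntegrable_inv_sqrt_mul_one_sub :
    IntervalIntegrable (fun w => (√(w * (1 - w)))⁻¹) volume 0 1 :=
  intervalIntegrable_deriv_of_nonneg (by fun_prop)
    (fun x hx => hasDerivAt_arcsin_two_mul_sub_one (by simpa using hx))
    (fun _ _ => inv_nonneg.2 (sqrt_nonneg _))

lemma integral_inv_sqrt_mul_one_sub : ∫ w in (0 : ℝ)..1, (√(w * (1 - w)))⁻¹ = π := by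
  rw [integral_eq_sub_of_hasDerivAt_of_le zero_le_one (by fun_prop)
    (fun x hx => hasDerivAt_arcsin_two_mul_sub_one hx) intervalIntegrable_inv_sqrt_mul_one_sub]
  norm_num

lemma inv_pi_le_integral_sq_mul_sqrt {g : ℝ → ℝ} (hg : Continuous g)
    (hg1 : ∫ w in (0 : ℝ)..1, g w = 1) :
    π⁻¹ ≤ ∫ w in (0 : ℝ)..1, g w ^ 2 * √(w * (1 - w)) := by
  have hsq : IntervalIntegrable (fun w => g w ^ 2 * √(w * (1 - w))) volume 0 1 :=
    (by fun_prop : Continuous fun w => g w ^ 2 * √(w * (1 - w))).intervalIntegrable 0 1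
  have hamgm : ∀ w ∈ Ioo (0 : ℝ) 1,
      g w ≤ π / 2 * (g w ^ 2 * √(w * (1 - w))) + (2 * π)⁻¹ * (√(w * (1 - w)))⁻¹ := by
    intro w hw
    have hs : 0 < √(w * (1 - w)) := sqrt_pos.2 (mul_pos hw.1 (sub_pos.2 hw.2))
    rw [← sub_nonneg]
    have key : π / 2 * (g w ^ 2 * √(w * (1 - w))) + (2 * π)⁻¹ * (√(w * (1 - w)))⁻¹ - g w
        = (π * √(w * (1 - w)) * g w - 1) ^ 2 / (2 * π * √(w * (1 - w))) := by
      field_simp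
      ring
    rw [key]
    positivity
  have h := integral_mono_on_of_le_Ioo zero_le_one (hg.intervalIntegrable 0 1)
    ((hsq.const_mul _).add (intervalIntegrable_inv_sqrt_mul_one_sub.const_mul _)) hamgm
  rw [hg1, integral_add (hsq.const_mul _) (intervalIntegrable_inv_sqrt_mul_one_sub.const_mul _),
    intervalIntegral.integral_const_mul, intervalIntegral.integral_const_mul,
    integral_inv_sqrt_mul_one_sub] at h
  have hπ := pi_pos
  rw [inv_le_iff_one_le_mul₀' hπ]
  field_simp at h
  nlinarith

lemma integral_eval_derivative_bernsteinSum {k : ℕ} {p : ℕ → ℝ} (h0 : p 0 = 0) (hk1 : p k = 1) :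
    ∫ w in (0 : ℝ)..1, (derivative (bernsteinSum k p)).eval w = 1 := by
  rw [integral_eq_sub_of_hasDerivAt (fun x _ => (bernsteinSum k p).hasDerivAt x)
    ((derivative (bernsteinSum k p)).continuous.intervalIntegrable 0 1)]
  simp [bernsteinSum, eval_finsetSum, bernsteinPolynomial.eval_at_0, bernsteinPolynomial.eval_at_1,
    h0, hk1]

lemma measurable_Chat_mul_arcsine (k : ℕ) (p : ℕ → ℝ) :
    Measurable fun w => Chat k w p * (1 / (π * √(w * (1 - w)))) := by
  simp only [Chat, d2, alph, logb]
  fun_prop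

section ArcsineWeighted

variable {k : ℕ} {p : ℕ → ℝ} (hp : ∀ z ≤ k, p z ∈ Icc (0 : ℝ) 1) (h0 : p 0 = 0) (hk1 : p k = 1)
  {w : ℝ} (hw : w ∈ Ioo (0 : ℝ) 1)
include hp h0 hk1 hw

lemma Chat_le_mul_log_inv : Chat k w p ≤ k / log 2 * log (w * (1 - w))⁻¹ := by
  have hu : 0 < w * (1 - w) := mul_pos hw.1 (sub_pos.2 hw.2)
  refine (Chat_le_neg_log_div_log_two hp (Ioo_subset_Icc_self hw)
    (eval_bernsteinSum_mem_Ioo hp h0 hk1 hw)).trans ?_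
  have h := log_le_log (pow_pos hu k)
    (mul_pow_le_eval_bernsteinSum_mul_one_sub hp h0 hk1 (Ioo_subset_Icc_self hw))
  rw [log_pow] at h
  rw [log_inv, div_mul_eq_mul_div, div_le_div_iff_of_pos_right (log_pos one_lt_two)]
  linarith

lemma Chat_mul_arcsine_le :
    Chat k w p * (1 / (π * √(w * (1 - w))))
      ≤ 4 * k / (π * log 2) * (w ^ (-(3 / 4) : ℝ) + (1 - w) ^ (-(3 / 4) : ℝ)) := by
  have hw1 : 0 < 1 - w := sub_pos.2 hw.2
  set v := (w * (1 - w))⁻¹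
  have hv : 0 < v := inv_pos.2 (mul_pos hw.1 hw1)
  have hweight : 1 / (π * √(w * (1 - w))) = v ^ (1 / 2 : ℝ) / π := by
    rw [sqrt_eq_rpow, inv_rpow (mul_pos hw.1 hw1).le]
    field_simp
  have hlog : log v ≤ 4 * v ^ (1 / 4 : ℝ) := by
    have := log_le_rpow_div hv.le (by norm_num : (0 : ℝ) < 1 / 4)
    linarith
  have hv_eq : v = w⁻¹ + (1 - w)⁻¹ := by
    simp only [v]
    field_simp [hw.1.ne', hw1.ne']
    ring
  have hsplit : v ^ (3 / 4 : ℝ) ≤ w ^ (-(3 / 4) : ℝ) + (1 - w) ^ (-(3 / 4) : ℝ) := by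
    rw [hv_eq, rpow_neg hw.1.le, rpow_neg hw1.le, ← inv_rpow hw.1.le, ← inv_rpow hw1.le]
    exact rpow_add_le_add_rpow (inv_nonneg.2 hw.1.le) (inv_nonneg.2 hw1.le) (by norm_num)
      (by norm_num)
  have hlog2 := log_pos one_lt_two
  calc _ ≤ k / log 2 * log v * (v ^ (1 / 2 : ℝ) / π) := by
        rw [hweight]
        gcongr
        exact Chat_le_mul_log_inv hp h0 hk1 hw
    _ ≤ k / log 2 * (4 * v ^ (1 / 4 : ℝ)) * (v ^ (1 / 2 : ℝ) / π) := by gcongr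
    _ = 4 * k / (π * log 2) * (v ^ (1 / 4 : ℝ) * v ^ (1 / 2 : ℝ)) := by ring
    _ = 4 * k / (π * log 2) * v ^ (3 / 4 : ℝ) := by rw [← rpow_add hv]; norm_num
    _ ≤ _ := by gcongr

lemma two_div_mul_le_Chat_mul_arcsine (hk : 1 ≤ k) :
    2 / (k * π * log 2) * ((derivative (bernsteinSum k p)).eval w ^ 2 * √(w * (1 - w)))
      ≤ Chat k w p * (1 / (π * √(w * (1 - w)))) := by
  have hk0 : (0 : ℝ) < k := by exact_mod_cast hk
  have hu : 0 < w * (1 - w) := mul_pos hw.1 (sub_pos.2 hw.2)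
  have hs : 0 < √(w * (1 - w)) := sqrt_pos.2 hu
  have hss : √(w * (1 - w)) * √(w * (1 - w)) = w * (1 - w) := mul_self_sqrt hu.le
  have hvar := mul_sq_eval_derivative_bernsteinSum_le k p (Ioo_subset_Icc_self hw)
  have hpinsker := two_div_log_two_mul_sum_le_Chat hp (Ioo_subset_Icc_self hw)
    (eval_bernsteinSum_mem_Ioo hp h0 hk1 hw)
  have hlog := log_pos one_lt_two
  calc _ = 2 / log 2 * (w * (1 - w) * (derivative (bernsteinSum k p)).eval w ^ 2 / k)
        * (1 / (π * √(w * (1 - w)))) := by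
        set s := √(w * (1 - w))
        rw [← hss]
        field_simp
    _ ≤ _ := by
        gcongr
        exact hpinsker.trans' (by gcongr; rwa [div_le_iff₀' hk0])

end ArcsineWeighted

lemma intervalIntegrable_Chat_mul_arcsine {k : ℕ} {p : ℕ → ℝ}
    (hp : ∀ z ≤ k, p z ∈ Icc (0 : ℝ) 1) (h0 : p 0 = 0) (hk1 : p k = 1) :
    IntervalIntegrable (fun w => Chat k w p * (1 / (π * √(w * (1 - w))))) volume 0 1 := by
  have hpow : IntervalIntegrable (fun w : ℝ => w ^ (-(3 / 4) : ℝ)) volume 0 1 :=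
    intervalIntegrable_rpow' (by norm_num)
  have hdom := (hpow.add (by simpa using (hpow.comp_sub_left 1).symm)).const_mul
    (4 * k / (π * log 2))
  refine hdom.mono_fun' (measurable_Chat_mul_arcsine k p).aestronglyMeasurable ?_
  rw [uIoc_of_le zero_le_one, ← Measure.restrict_congr_set Ioo_ae_eq_Ioc]
  filter_upwards [ae_restrict_mem measurableSet_Ioo] with w hw
  have := Chat_nonneg hp (Ioo_subset_Icc_self hw) (eval_bernsteinSum_mem_Ioo hp h0 hk1 hw)
  rw [norm_of_nonneg (by positivity)]
  exact Chat_mul_arcsine_le hp h0 hk1 hw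

theorem capacity_lower_bound (k : ℕ) (hk : 1 ≤ k) (p : ℕ → ℝ)
    (hp : ∀ z ≤ k, p z ∈ Set.Icc (0 : ℝ) 1) (h0 : p 0 = 0) (hk1 : p k = 1) :
    (1 / (k : ℝ)) *
        ∫ w in (0:ℝ)..1, Chat k w p * (1 / (Real.pi * Real.sqrt (w * (1 - w))))
      ≥ 2 / (k ^ 2 * Real.pi ^ 2 * Real.log 2) := by
  have hlower := inv_pi_le_integral_sq_mul_sqrt (derivative (bernsteinSum k p)).continuous
    (integral_eval_derivative_bernsteinSum h0 hk1)
  have hmono : 2 / (k * π * log 2)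
        * ∫ w in (0 : ℝ)..1, (derivative (bernsteinSum k p)).eval w ^ 2 * √(w * (1 - w))
      ≤ ∫ w in (0 : ℝ)..1, Chat k w p * (1 / (π * √(w * (1 - w)))) := by
    rw [← intervalIntegral.integral_const_mul]
    exact integral_mono_on_of_le_Ioo zero_le_one (Continuous.intervalIntegrable (by fun_prop) 0 1)
      (intervalIntegrable_Chat_mul_arcsine hp h0 hk1)
      fun w hw => two_div_mul_le_Chat_mul_arcsine hp h0 hk1 hw hk
  calc 2 / (k ^ 2 * π ^ 2 * log 2) = 1 / k * (2 / (k * π * log 2) * π⁻¹) := by field_simp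
    _ ≤ _ := by gcongr; exact hmono.trans' (by gcongr)
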